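/- If a and a′ are directed paths in the square annulus X that both pass below the obstruction (or both pass above it), then there exists a directed homotopy from a to a′ in X. (The paper's proof in 2.1 that any two controlled paths on the same side of the obstruction are 2-equivalent.) -/

import Mathlib

open Set

/-- The obstruction: the open square `(1/3, 2/3) × (1/3, 2/3)`. -/
def Qobs : Set (ℝ × ℝ) := Ioo (1/3 : ℝ) (2/3) ×ˢ Ioo (1/3 : ℝ) (2/3)

/-- A directed path in `[0,1]²` avoiding `Q`, with nondecreasing coordinates,
from `(0,0)` to `(1,1)`. -/
def DiPath (Q : Set (ℝ × ℝ)) (a : ℝ → ℝ × ℝ) : Prop :=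
  ContinuousOn a (Icc 0 1) ∧
  (∀ t ∈ Icc (0:ℝ) 1, a t ∈ Icc (0:ℝ) 1 ×ˢ Icc (0:ℝ) 1) ∧
  (∀ t ∈ Icc (0:ℝ) 1, a t ∉ Q) ∧
  MonotoneOn (fun t => (a t).1) (Icc 0 1) ∧
  MonotoneOn (fun t => (a t).2) (Icc 0 1) ∧
  a 0 = (0, 0) ∧ a 1 = (1, 1)

/-- `a` passes below the obstruction. -/
def Below (a : ℝ → ℝ × ℝ) : Prop :=
  ∀ t ∈ Icc (0:ℝ) 1, (a t).1 ∈ Ioo (1/3 : ℝ) (2/3) → (a t).2 ≤ 1/3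

/-- `a` passes above the obstruction. -/
def Above (a : ℝ → ℝ × ℝ) : Prop :=
  ∀ t ∈ Icc (0:ℝ) 1, (a t).1 ∈ Ioo (1/3 : ℝ) (2/3) → (a t).2 ≥ 2/3

/-- A directed homotopy from `a` to `a'` avoiding `Q`: a continuous map
`H : [0,1] × [0,1] → [0,1]²` with `H (-,0) = a`, `H (-,1) = a'`, fixed endpoints
`(0,0)` and `(1,1)`, avoiding `Q`, all of whose intermediate paths have nondecreasing
coordinates. -/
def DiHomotopy (Q : Set (ℝ × ℝ)) (a a' : ℝ → ℝ × ℝ) (H : ℝ → ℝ → ℝ × ℝ) : Prop :=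
  ContinuousOn (fun p : ℝ × ℝ => H p.1 p.2) (Icc 0 1 ×ˢ Icc 0 1) ∧
  (∀ t ∈ Icc (0:ℝ) 1, ∀ s ∈ Icc (0:ℝ) 1, H t s ∈ Icc (0:ℝ) 1 ×ˢ Icc (0:ℝ) 1) ∧
  (∀ t ∈ Icc (0:ℝ) 1, H t 0 = a t) ∧
  (∀ t ∈ Icc (0:ℝ) 1, H t 1 = a' t) ∧
  (∀ s ∈ Icc (0:ℝ) 1, H 0 s = (0, 0)) ∧
  (∀ s ∈ Icc (0:ℝ) 1, H 1 s = (1, 1)) ∧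
  (∀ t ∈ Icc (0:ℝ) 1, ∀ s ∈ Icc (0:ℝ) 1, H t s ∉ Q) ∧
  (∀ s ∈ Icc (0:ℝ) 1, MonotoneOn (fun t => (H t s).1) (Icc 0 1) ∧
    MonotoneOn (fun t => (H t s).2) (Icc 0 1))

/-!
A directed path passing below the obstruction never enters the region `x < 2/3, y > 1/3`: it
would have to cross `x = 1/2` later, above height `1/3`. So it stays in the L-shaped region
`{y ≤ 1/3} ∪ {x ≥ 2/3}`, which meets every anti-diagonal `x + y = u` in a segment containing the
point of the lower-right edge `{y = 0} ∪ {x = 1}` of the square. Sliding along anti-diagonals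
deforms the path, through directed paths, onto that edge parametrized by `x + y`, and two such
parametrizations are joined by interpolating the parameter. Transposing the square exchanges
the two sides of the obstruction.
-/

def DiHomotopic (Q : Set (ℝ × ℝ)) (a b : ℝ → ℝ × ℝ) : Prop :=
  ∃ H : ℝ → ℝ → ℝ × ℝ, DiHomotopy Q a b H

structure IsDiMap (Q Q' : Set (ℝ × ℝ)) (Φ : ℝ × ℝ → ℝ × ℝ) : Prop where
  continuousOn : ContinuousOn Φ (Icc 0 1 ×ˢ Icc 0 1)
  monotoneOn : MonotoneOn Φ (Icc 0 1 ×ˢ Icc 0 1)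
  mapsTo : MapsTo Φ (Icc 0 1 ×ˢ Icc 0 1 \ Q) (Icc 0 1 ×ˢ Icc 0 1 \ Q')
  map_zero : Φ (0, 0) = (0, 0)
  map_one : Φ (1, 1) = (1, 1)

theorem monotoneOn_prod_iff {α β γ : Type*} [Preorder α] [Preorder β] [Preorder γ]
    {f : α → β × γ} {s : Set α} :
    MonotoneOn f s ↔ MonotoneOn (fun x => (f x).1) s ∧ MonotoneOn (fun x => (f x).2) s :=
  ⟨fun h => ⟨fun _ hx _ hy hxy => (h hx hy hxy).1, fun _ hx _ hy hxy => (h hx hy hxy).2⟩,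
    fun h _ hx _ hy hxy => ⟨h.1 hx hy hxy, h.2 hx hy hxy⟩⟩

section General

variable {Q Q' : Set (ℝ × ℝ)} {a b c : ℝ → ℝ × ℝ} {Φ : ℝ × ℝ → ℝ × ℝ}

theorem DiPath.monotoneOn (ha : DiPath Q a) : MonotoneOn a (Icc 0 1) :=
  monotoneOn_prod_iff.2 ⟨ha.2.2.2.1, ha.2.2.2.2.1⟩

theorem DiPath.mono (hQ : Q' ⊆ Q) (ha : DiPath Q a) : DiPath Q' a := by
  obtain ⟨hc, hr, hQa, hx, hy, h0, h1⟩ := ha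
  exact ⟨hc, hr, fun t ht h => hQa t ht (hQ h), hx, hy, h0, h1⟩

theorem DiPath.map (hΦ : IsDiMap Q Q' Φ) (ha : DiPath Q a) : DiPath Q' (Φ ∘ a) := by
  have hmono := ha.monotoneOn
  obtain ⟨hc, hr, hQa, -, -, h0, h1⟩ := ha
  have hX : MapsTo a (Icc 0 1) (Icc 0 1 ×ˢ Icc 0 1 \ Q) := fun t ht => ⟨hr t ht, hQa t ht⟩
  have hΦa := monotoneOn_prod_iff.1 <| hΦ.monotoneOn.comp hmono (fun t ht => (hX ht).1)
  exact ⟨hΦ.continuousOn.comp hc (fun t ht => (hX ht).1), fun t ht => (hΦ.mapsTo (hX ht)).1,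
    fun t ht => (hΦ.mapsTo (hX ht)).2, hΦa.1, hΦa.2,
    by simp [h0, hΦ.map_zero], by simp [h1, hΦ.map_one]⟩

theorem DiHomotopic.map (hΦ : IsDiMap Q Q' Φ) (h : DiHomotopic Q a b) :
    DiHomotopic Q' (Φ ∘ a) (Φ ∘ b) := by
  obtain ⟨H, hc, hr, ha, hb, h0, h1, hQ, hmono⟩ := h
  have hX : ∀ t ∈ Icc (0:ℝ) 1, ∀ s ∈ Icc (0:ℝ) 1, H t s ∈ Icc 0 1 ×ˢ Icc 0 1 \ Q :=
    fun t ht s hs => ⟨hr t ht s hs, hQ t ht s hs⟩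
  refine ⟨fun t s => Φ (H t s), hΦ.continuousOn.comp hc fun p hp => (hX _ hp.1 _ hp.2).1,
    fun t ht s hs => (hΦ.mapsTo (hX t ht s hs)).1, fun t ht => by simp [ha t ht],
    fun t ht => by simp [hb t ht], fun s hs => by simp [h0 s hs, hΦ.map_zero],
    fun s hs => by simp [h1 s hs, hΦ.map_one], fun t ht s hs => (hΦ.mapsTo (hX t ht s hs)).2,
    fun s hs => monotoneOn_prod_iff.1 <|
      hΦ.monotoneOn.comp (monotoneOn_prod_iff.2 (hmono s hs)) fun t ht => (hX t ht s hs).1⟩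

theorem DiHomotopic.symm (h : DiHomotopic Q a b) : DiHomotopic Q b a := by
  obtain ⟨H, hc, hr, ha, hb, h0, h1, hQ, hmono⟩ := h
  have hflip : ∀ s ∈ Icc (0:ℝ) 1, 1 - s ∈ Icc (0:ℝ) 1 :=
    fun s hs => ⟨by linarith [hs.2], by linarith [hs.1]⟩
  refine ⟨fun t s => H t (1 - s),
    hc.comp (by fun_prop : Continuous fun p : ℝ × ℝ => (p.1, 1 - p.2)).continuousOn
      fun p hp => ⟨hp.1, hflip _ hp.2⟩,
    fun t ht s hs => hr t ht _ (hflip s hs), fun t ht => by simpa using hb t ht,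
    fun t ht => by simpa using ha t ht, fun s hs => h0 _ (hflip s hs),
    fun s hs => h1 _ (hflip s hs), fun t ht s hs => hQ t ht _ (hflip s hs),
    fun s hs => hmono _ (hflip s hs)⟩

theorem DiHomotopic.trans (hab : DiHomotopic Q a b) (hbc : DiHomotopic Q b c) :
    DiHomotopic Q a c := by
  obtain ⟨H, hH, hHr, hHa, hHb, hH0, hH1, hHQ, hHm⟩ := hab
  obtain ⟨K, hK, hKr, hKb, hKc, hK0, hK1, hKQ, hKm⟩ := hbc
  have hfst : ∀ s ∈ Icc (0:ℝ) 1, s ≤ 1/2 → 2 * s ∈ Icc (0:ℝ) 1 :=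
    fun s hs h => ⟨by linarith [hs.1], by linarith⟩
  have hsnd : ∀ s ∈ Icc (0:ℝ) 1, ¬ s ≤ 1/2 → 2 * s - 1 ∈ Icc (0:ℝ) 1 :=
    fun s hs h => ⟨by linarith, by linarith [hs.2]⟩
  set L : ℝ → ℝ → ℝ × ℝ := fun t s => if s ≤ 1/2 then H t (2 * s) else K t (2 * s - 1)
  have hL₁ : ContinuousOn (fun p : ℝ × ℝ => L p.1 p.2) (Icc 0 1 ×ˢ Icc 0 (1/2)) :=
    (hH.comp (by fun_prop : Continuous fun p : ℝ × ℝ => (p.1, 2 * p.2)).continuousOn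
      fun p hp => ⟨hp.1, by linarith [hp.2.1], by linarith [hp.2.2]⟩).congr
      fun p hp => if_pos hp.2.2
  have hL₂ : ContinuousOn (fun p : ℝ × ℝ => L p.1 p.2) (Icc 0 1 ×ˢ Icc (1/2) 1) := by
    refine (hK.comp (by fun_prop : Continuous fun p : ℝ × ℝ => (p.1, 2 * p.2 - 1)).continuousOn
      fun p hp => ⟨hp.1, by linarith [hp.2.1], by linarith [hp.2.2]⟩).congr fun p hp => ?_
    by_cases h : p.2 ≤ 1/2
    · have hp2 : p.2 = 1/2 := le_antisymm h hp.2.1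
      simp [L, hp2, hHb p.1 hp.1, hKb p.1 hp.1]
    · exact if_neg h
  have hsplit : Icc (0:ℝ) 1 ×ˢ Icc (0:ℝ) 1 = Icc 0 1 ×ˢ Icc 0 (1/2) ∪ Icc 0 1 ×ˢ Icc (1/2) 1 := by
    rw [← prod_union, Icc_union_Icc_eq_Icc (by norm_num) (by norm_num)]
  refine ⟨L, hsplit ▸ hL₁.union_of_isClosed hL₂ (isClosed_Icc.prod isClosed_Icc)
    (isClosed_Icc.prod isClosed_Icc), fun t ht s hs => ?_, fun t ht => by norm_num [L, hHa t ht],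
    fun t ht => by norm_num [L, hKc t ht], fun s hs => ?_, fun s hs => ?_, fun t ht s hs => ?_,
    fun s hs => ?_⟩ <;>
  by_cases h : s ≤ 1/2 <;> simp only [L, h, ↓reduceIte]
  exacts [hHr t ht _ (hfst s hs h), hKr t ht _ (hsnd s hs h), hH0 _ (hfst s hs h),
    hK0 _ (hsnd s hs h), hH1 _ (hfst s hs h), hK1 _ (hsnd s hs h), hHQ t ht _ (hfst s hs h),
    hKQ t ht _ (hsnd s hs h), hHm _ (hfst s hs h), hKm _ (hsnd s hs h)]

theorem diHomotopic_of_disjoint_segment (ha : DiPath Q a) (hb : DiPath Q b)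
    (hseg : ∀ t ∈ Icc (0:ℝ) 1, Disjoint (segment ℝ (a t) (b t)) Q) : DiHomotopic Q a b := by
  have hma := ha.monotoneOn
  have hmb := hb.monotoneOn
  obtain ⟨hca, hra, -, -, -, ha0, ha1⟩ := ha
  obtain ⟨hcb, hrb, -, -, -, hb0, hb1⟩ := hb
  have hmem : ∀ t, ∀ s ∈ Icc (0:ℝ) 1, (1 - s) • a t + s • b t ∈ segment ℝ (a t) (b t) :=
    fun t s hs => ⟨1 - s, s, by linarith [hs.2], hs.1, by ring, rfl⟩
  refine ⟨fun t s => (1 - s) • a t + s • b t, ?_, fun t ht s hs => ?_, fun t ht => by simp,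
    fun t ht => by simp, fun s hs => by simp [ha0, hb0], fun s hs => ?_,
    fun t ht s hs => (hseg t ht).notMem_of_mem_left (hmem t s hs), fun s hs => ?_⟩
  · have hfst : MapsTo Prod.fst (Icc (0:ℝ) 1 ×ˢ Icc (0:ℝ) 1) (Icc 0 1) := fun p hp => hp.1
    exact ((continuous_const.sub continuous_snd).continuousOn.smul
      (hca.comp continuousOn_fst hfst)).add
      (continuous_snd.continuousOn.smul (hcb.comp continuousOn_fst hfst))
  · exact (convex_Icc 0 1).prod (convex_Icc 0 1) (hra t ht) (hrb t ht) (by linarith [hs.2]) hs.1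
      (by ring)
  · dsimp only
    rw [ha1, hb1, ← add_smul]
    simp
  · refine monotoneOn_prod_iff.1 fun t ht u hu htu => add_le_add ?_ ?_
    exacts [smul_le_smul_of_nonneg_left (hma ht hu htu) (by linarith [hs.2]),
      smul_le_smul_of_nonneg_left (hmb ht hu htu) hs.1]

end General

theorem isDiMap_swap : IsDiMap Qobs Qobs Prod.swap where
  continuousOn := continuous_swap.continuousOn
  monotoneOn := fun _ _ _ _ h => ⟨h.2, h.1⟩
  mapsTo := fun _ hp => ⟨⟨hp.1.2, hp.1.1⟩, fun h => hp.2 ⟨h.2, h.1⟩⟩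
  map_zero := rfl
  map_one := rfl

/-- Projection along the anti-diagonals onto the lower-right edge `{y = 0} ∪ {x = 1}` of the
square. -/
def lowerRightProj (p : ℝ × ℝ) : ℝ × ℝ := (min (p.1 + p.2) 1, max (p.1 + p.2 - 1) 0)

theorem isDiMap_lowerRightProj : IsDiMap ∅ Qobs lowerRightProj where
  continuousOn := by unfold lowerRightProj; fun_prop
  monotoneOn := fun _ _ _ _ h =>
    ⟨min_le_min_right _ (add_le_add h.1 h.2), max_le_max_right _ (by linarith [h.1, h.2])⟩
  mapsTo := by
    rintro p ⟨⟨⟨hx0, hx1⟩, hy0, hy1⟩, -⟩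
    refine ⟨⟨⟨le_min (by linarith) zero_le_one, min_le_right _ _⟩, le_max_right _ _,
      max_le (by linarith) zero_le_one⟩, fun ⟨hx, hy⟩ => ?_⟩
    rcases le_total (p.1 + p.2) 1 with hu | hu
    · exact hy.1.not_ge (max_le (by linarith) (by norm_num))
    · exact hx.2.not_ge (le_min (by linarith) (by norm_num))
  map_zero := by norm_num [lowerRightProj]
  map_one := by norm_num [lowerRightProj]

theorem disjoint_segment_lowerRightProj {p : ℝ × ℝ} (hp : p.2 ≤ 1/3 ∨ 2/3 ≤ p.1) :
    Disjoint (segment ℝ p (lowerRightProj p)) Qobs := by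
  rw [Set.disjoint_left]
  rintro _ ⟨r, s, hr, hs, hrs, rfl⟩ ⟨hx, hy⟩
  simp only [lowerRightProj, Prod.fst_add, Prod.snd_add, Prod.smul_fst, Prod.smul_snd,
    smul_eq_mul] at hx hy
  rcases le_total (p.1 + p.2) 1 with hu | hu
  · have hp2 : p.2 ≤ 1/3 := hp.elim id fun h => by linarith
    rw [max_eq_right (by linarith)] at hy
    nlinarith [hy.1, mul_le_mul_of_nonneg_left hp2 hr]
  · have hp1 : 2/3 ≤ p.1 := hp.elim (fun h => by linarith) id
    rw [min_eq_right hu] at hx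
    nlinarith [hx.2, mul_le_mul_of_nonneg_left hp1 hr]

section Side

variable {Q : Set (ℝ × ℝ)} {a a' : ℝ → ℝ × ℝ}

theorem Below.snd_le_or_le_fst (hb : Below a) (ha : DiPath Q a) {t : ℝ}
    (ht : t ∈ Icc (0:ℝ) 1) : (a t).2 ≤ 1/3 ∨ 2/3 ≤ (a t).1 := by
  by_contra! h
  have hmono := ha.monotoneOn
  obtain ⟨hc, -, -, -, -, -, h1⟩ := ha
  by_cases hx : 1/3 < (a t).1
  · exact (hb t ht ⟨hx, h.2⟩).not_gt h.1
  obtain ⟨t', ht', hx' : (a t').1 = 1/2⟩ :=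
    intermediate_value_Icc ht.2 (hc.mono (Icc_subset_Icc_left ht.1)).fst
    ⟨(by linarith : (a t).1 ≤ 1/2), by rw [h1]; norm_num⟩
  have ht'I : t' ∈ Icc (0:ℝ) 1 := ⟨ht.1.trans ht'.1, ht'.2⟩
  have hy := (hmono ht ht'I ht'.1).2
  exact (hb t' ht'I (by rw [hx']; norm_num)).not_gt (h.1.trans_le hy)

theorem Above.below_swap (hab : Above a) (ha : DiPath Q a) : Below (Prod.swap ∘ a) := by
  intro t ht hy
  simp only [Function.comp_apply, Prod.fst_swap, Prod.snd_swap] at hy ⊢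
  by_contra! hx
  have hmono := ha.monotoneOn
  obtain ⟨hc, -, -, -, -, h0, -⟩ := ha
  by_cases hx' : (a t).1 < 2/3
  · exact (hab t ht ⟨hx, hx'⟩).not_gt hy.2
  obtain ⟨t', ht', hx'' : (a t').1 = 1/2⟩ :=
    intermediate_value_Icc ht.1 (hc.mono (Icc_subset_Icc_right ht.2)).fst
    ⟨by rw [h0]; norm_num, (by linarith : 1/2 ≤ (a t).1)⟩
  have ht'I : t' ∈ Icc (0:ℝ) 1 := ⟨ht'.1, ht'.2.trans ht.2⟩
  have hy' := (hmono ht'I ht ht'.2).2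
  exact (hab t' ht'I (by rw [hx'']; norm_num)).not_gt (hy'.trans_lt hy.2)

theorem Below.diHomotopic_lowerRightProj (hb : Below a) (ha : DiPath Qobs a) :
    DiHomotopic Qobs a (lowerRightProj ∘ a) :=
  diHomotopic_of_disjoint_segment ha ((ha.mono (empty_subset _)).map isDiMap_lowerRightProj)
    fun _ ht => disjoint_segment_lowerRightProj (hb.snd_le_or_le_fst ha ht)

theorem diHomotopic_of_below (hb : Below a) (hb' : Below a') (ha : DiPath Qobs a)
    (ha' : DiPath Qobs a') : DiHomotopic Qobs a a' :=
  have hedge : DiHomotopic Qobs (lowerRightProj ∘ a) (lowerRightProj ∘ a') :=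
    (diHomotopic_of_disjoint_segment (ha.mono (empty_subset _)) (ha'.mono (empty_subset _))
      fun _ _ => disjoint_empty _).map isDiMap_lowerRightProj
  ((hb.diHomotopic_lowerRightProj ha).trans hedge).trans (hb'.diHomotopic_lowerRightProj ha').symm

end Side

/-- Two directed paths in the square annulus passing on the same side of the obstruction
are joined by a directed homotopy. (The proof in 2.1 that any two controlled paths on the
same side of the obstruction are 2-equivalent.) -/
theorem diHomotopy_of_same_side (a a' : ℝ → ℝ × ℝ)
    (ha : DiPath Qobs a) (ha' : DiPath Qobs a')
    (hside : (Below a ∧ Below a') ∨ (Above a ∧ Above a')) :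
    ∃ H : ℝ → ℝ → ℝ × ℝ, DiHomotopy Qobs a a' H := by
  rcases hside with ⟨hb, hb'⟩ | ⟨hab, hab'⟩
  · exact diHomotopic_of_below hb hb' ha ha'
  · exact (diHomotopic_of_below (hab.below_swap ha) (hab'.below_swap ha')
      (ha.map isDiMap_swap) (ha'.map isDiMap_swap)).map isDiMap_swap
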